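/- Let X ⊆ ℝⁿ be a closed convex set and f ∈ ℝ[x₁,…,xₙ] a polynomial with f(x) ≥ m for all x ∈ X, for some m > 0. Then there exists N₀ ∈ ℝ such that for every N ≥ N₀ the function Φ_N(x) = e^{e^{N|x|²}} f(x) is strongly convex on X. -/

import Mathlib

/-!
On a segment `t ↦ x + t • v` of `X`, put `q = N ‖x + t • v‖²` and `u = exp q`. The second
derivative of `Φ_N = exp (exp q) * f` along the segment is
`exp u * ((u q')² f + 2 u q' f' + u (q'' + q'²) f + f'')`. As `f ≥ m`, completing the square bounds
the first two terms below by `-f'² / m`, while `u q'' f ≥ 2 N m u ‖v‖²`. Both `f'²` and `|f''|` are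
at most `‖v‖²` times a polynomial in `x + t • v`, and a polynomial is bounded by `C exp (D ‖·‖²)`,
hence by `C u` once `N ≥ D`. So for `N` large the second derivative is at least `‖v‖²`: `Φ_N` is
`1`-strongly convex on `X`.
-/

open Real Set MvPolynomial

section StrongConvexity

variable {E : Type*} [NormedAddCommGroup E] [NormedSpace ℝ E]

theorem strongConvexOn_of_hasDerivAt2 {D : Set ℝ} (hD : Convex ℝ D) {ψ ψ' ψ'' : ℝ → ℝ} {μ : ℝ}
    (hψ : ∀ t, HasDerivAt ψ (ψ' t) t) (hψ' : ∀ t, HasDerivAt ψ' (ψ'' t) t)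
    (hμ : ∀ t ∈ interior D, μ ≤ ψ'' t) : StrongConvexOn D μ ψ := by
  have hsq : ∀ t : ℝ, HasDerivAt (fun t => μ / 2 * t ^ 2) (μ * t) t := fun t =>
    ((hasDerivAt_pow 2 t).const_mul (μ / 2)).congr_deriv (by norm_num; ring)
  have hlin : ∀ t : ℝ, HasDerivAt (fun t => μ * t) μ t := fun t => by
    simpa using (hasDerivAt_id t).const_mul μ
  simp_rw [strongConvexOn_iff_convex, Real.norm_eq_abs, sq_abs]
  refine convexOn_of_hasDerivWithinAt2_nonneg hD
    (fun t _ => ((hψ t).sub (hsq t)).continuousAt.continuousWithinAt)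
    (fun t _ => ((hψ t).sub (hsq t)).hasDerivWithinAt)
    (fun t _ => ((hψ' t).sub (hlin t)).hasDerivWithinAt) fun t ht => ?_
  linarith [hμ t ht]

theorem strongConvexOn_of_forall_segment {s : Set E} (hs : Convex ℝ s) {F : E → ℝ} {μ : ℝ}
    (h : ∀ x ∈ s, ∀ y ∈ s,
      StrongConvexOn (Icc 0 1) (μ * ‖y - x‖ ^ 2) fun t : ℝ => F (x + t • (y - x))) :
    StrongConvexOn s μ F := by
  refine ⟨hs, fun x hx y hy a b ha hb hab => ?_⟩
  have h01 := (h x hx y hy).2 (left_mem_Icc.2 zero_le_one) (right_mem_Icc.2 zero_le_one) ha hb hab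
  obtain rfl : a = 1 - b := eq_sub_of_add_eq hab
  have hseg : x + b • (y - x) = (1 - b) • x + b • y := by module
  simp only [smul_eq_mul, mul_zero, mul_one, zero_add, zero_smul, add_zero, one_smul,
    add_sub_cancel, zero_sub, norm_neg, norm_one, one_pow, hseg] at h01
  rw [norm_sub_rev, smul_eq_mul, smul_eq_mul]
  linarith

end StrongConvexity

section ExpExp

variable {q q' A A' : ℝ → ℝ} {t dq dA q'' A'' : ℝ}

theorem HasDerivAt.exp_exp_mul (hq : HasDerivAt q dq t) (hA : HasDerivAt A dA t) :
    HasDerivAt (fun t => Real.exp (Real.exp (q t)) * A t)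
      (Real.exp (Real.exp (q t)) * (Real.exp (q t) * dq * A t + dA)) t :=
  (hq.exp.exp.mul hA).congr_deriv (by ring)

theorem HasDerivAt.exp_exp_mul_deriv (hq : HasDerivAt q (q' t) t) (hq' : HasDerivAt q' q'' t)
    (hA : HasDerivAt A (A' t) t) (hA' : HasDerivAt A' A'' t) :
    HasDerivAt (fun t => Real.exp (Real.exp (q t)) * (Real.exp (q t) * q' t * A t + A' t))
      (Real.exp (Real.exp (q t)) * ((Real.exp (q t) * q' t) ^ 2 * A t
        + 2 * (Real.exp (q t) * q' t) * A' t + Real.exp (q t) * (q'' + q' t ^ 2) * A t + A'')) t :=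
  (hq.exp.exp.mul (((hq.exp.mul hq').mul hA).add hA')).congr_deriv (by
    simp only [Pi.add_apply, Pi.mul_apply]; ring)

end ExpExp

theorem neg_sq_div_le_sq_mul_add_two_mul {m A a b : ℝ} (hm : 0 < m) (hA : m ≤ A) :
    -(b ^ 2 / m) ≤ a ^ 2 * A + 2 * a * b := by
  rw [neg_le, neg_add', le_div_iff₀ hm]
  nlinarith [sq_nonneg (m * a + b), mul_nonneg (sq_nonneg a) (sub_nonneg.2 hA)]

theorem le_exp_mul_deriv2_of_bounds {m N C V u a A A' A'' : ℝ} (hm : 0 < m) (hN0 : 0 ≤ N)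
    (hV : 0 ≤ V) (hu : 1 ≤ u) (hA : m ≤ A) (hA' : A' ^ 2 ≤ V * (C * u)) (hA'' : |A''| ≤ V * (C * u))
    (hN : 1 + (1 / m + 1) * C ≤ 2 * N * m) :
    V ≤ Real.exp u *
      ((u * a) ^ 2 * A + 2 * (u * a) * A' + u * (N * (2 * V) + a ^ 2) * A + A'') := by
  have hsq := neg_sq_div_le_sq_mul_add_two_mul (a := u * a) (b := A') hm hA
  have hcross : 0 ≤ u * a ^ 2 * A := by have := hm.trans_le hA; positivity
  have hmain : u * (N * (2 * V)) * m ≤ u * (N * (2 * V)) * A :=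
    mul_le_mul_of_nonneg_left hA (by positivity)
  have hA'm : A' ^ 2 / m ≤ V * (C * u) / m := div_le_div_of_nonneg_right hA' hm.le
  have hA''neg : -(V * (C * u)) ≤ A'' := neg_le_of_abs_le hA''
  have hgain : V ≤ V * u * (2 * N * m - (1 / m + 1) * C) := by
    calc V = V * 1 * 1 := by ring
      _ ≤ V * u * (2 * N * m - (1 / m + 1) * C) := by gcongr; linarith
  have hbracket : V ≤ (u * a) ^ 2 * A + 2 * (u * a) * A' + u * (N * (2 * V) + a ^ 2) * A + A'' := by
    calc V ≤ V * u * (2 * N * m - (1 / m + 1) * C) := hgain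
      _ = u * (N * (2 * V)) * m - V * (C * u) / m - V * (C * u) := by field_simp; ring
      _ ≤ _ := by linarith
  exact hbracket.trans (le_mul_of_one_le_left (hV.trans hbracket) (one_le_exp (by linarith)))

section Euclidean

variable {σ : Type*} [Fintype σ]

theorem sq_sum_mul_le_norm_sq_mul (v : EuclideanSpace ℝ σ) (a : σ → ℝ) :
    (∑ i, v i * a i) ^ 2 ≤ ‖v‖ ^ 2 * ∑ i, a i ^ 2 := by
  simpa only [EuclideanSpace.norm_sq_eq, Real.norm_eq_abs, sq_abs] using
    Finset.sum_mul_sq_le_sq_mul_sq Finset.univ (fun i => v i) a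

theorem abs_sum_mul_sum_mul_le (v : EuclideanSpace ℝ σ) (a : σ → σ → ℝ) :
    |∑ i, v i * ∑ j, v j * a i j| ≤ ‖v‖ ^ 2 * ∑ i, ∑ j, |a i j| := by
  have hv : ∀ i, |v i| ≤ ‖v‖ := fun i => by simpa using PiLp.norm_apply_le v i
  simp only [Finset.mul_sum]
  refine (Finset.abs_sum_le_sum_abs _ _).trans (Finset.sum_le_sum fun i _ =>
    (Finset.abs_sum_le_sum_abs _ _).trans (Finset.sum_le_sum fun j _ => ?_))
  rw [abs_mul, abs_mul, ← mul_assoc, sq]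
  gcongr <;> exact hv _

namespace MvPolynomial

theorem hasDerivAt_eval_add_smul (g : MvPolynomial σ ℝ) (x v : σ → ℝ) (t : ℝ) :
    HasDerivAt (fun t => eval (x + t • v) g) (∑ i, v i * eval (x + t • v) (pderiv i g)) t := by
  classical
  induction g using MvPolynomial.induction_on with
  | C c => simpa using hasDerivAt_const t c
  | add p q hp hq => simpa only [map_add, mul_add, Finset.sum_add_distrib] using hp.fun_add hq
  | mul_X p i hp =>
    have hxi : HasDerivAt (fun t => x i + t * v i) (v i) t := by
      simpa using ((hasDerivAt_id t).mul_const (v i)).const_add (x i)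
    refine ((hp.fun_mul hxi).congr_deriv ?_).congr_of_eventuallyEq ?_
    · have hsum : ∑ j, v j * ((x i + t * v i) * eval (x + t • v) (pderiv j p))
          = (∑ j, v j * eval (x + t • v) (pderiv j p)) * (x i + t * v i) := by
        rw [Finset.sum_mul]
        exact Finset.sum_congr rfl fun j _ => by ring
      simp only [Derivation.leibniz, pderiv_X, smul_eq_mul, map_add, map_mul, eval_X, mul_add,
        Finset.sum_add_distrib, Pi.single_apply, apply_ite (eval _), map_zero, mul_ite,
        mul_one, mul_zero, Finset.sum_ite_eq, Finset.mem_univ, if_true, Pi.add_apply,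
        Pi.smul_apply, hsum]
      ring
    · exact Filter.Eventually.of_forall fun s => by simp

theorem exists_abs_eval_le_mul_exp (g : MvPolynomial σ ℝ) :
    ∃ C D : ℝ, 0 ≤ C ∧ ∀ w : EuclideanSpace ℝ σ, |eval w.ofLp g| ≤ C * exp (D * ‖w‖ ^ 2) := by
  induction g using MvPolynomial.induction_on with
  | C c => exact ⟨|c|, 0, abs_nonneg c, fun w => by simp⟩
  | add p q hp hq =>
    obtain ⟨C₁, D₁, hC₁, h₁⟩ := hp
    obtain ⟨C₂, D₂, hC₂, h₂⟩ := hq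
    refine ⟨C₁ + C₂, max D₁ D₂, add_nonneg hC₁ hC₂, fun w => ?_⟩
    calc |eval w.ofLp (p + q)| ≤ |eval w.ofLp p| + |eval w.ofLp q| := by
          rw [map_add]; exact abs_add_le _ _
      _ ≤ C₁ * exp (max D₁ D₂ * ‖w‖ ^ 2) + C₂ * exp (max D₁ D₂ * ‖w‖ ^ 2) := by
          gcongr
          · exact (h₁ w).trans (by gcongr; exact le_max_left _ _)
          · exact (h₂ w).trans (by gcongr; exact le_max_right _ _)
      _ = (C₁ + C₂) * exp (max D₁ D₂ * ‖w‖ ^ 2) := by ring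
  | mul_X p i hp =>
    obtain ⟨C, D, hC, h⟩ := hp
    refine ⟨C, D + 1, hC, fun w => ?_⟩
    have hwi : |w i| ≤ exp (‖w‖ ^ 2) := by
      have := PiLp.norm_apply_le w i
      rw [Real.norm_eq_abs] at this
      nlinarith [add_one_le_exp (‖w‖ ^ 2), sq_nonneg (‖w‖ - 1)]
    calc |eval w.ofLp (p * X i)| = |eval w.ofLp p| * |w i| := by rw [map_mul, eval_X, abs_mul]
      _ ≤ C * exp (D * ‖w‖ ^ 2) * exp (‖w‖ ^ 2) := by gcongr; exact h w
      _ = C * exp ((D + 1) * ‖w‖ ^ 2) := by rw [mul_assoc, ← exp_add]; ring_nf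

theorem exists_pderiv_growth_bound (f : MvPolynomial σ ℝ) :
    ∃ C D : ℝ, 0 ≤ C ∧ ∀ w : EuclideanSpace ℝ σ,
      ∑ i, eval w.ofLp (pderiv i f) ^ 2 ≤ C * exp (D * ‖w‖ ^ 2) ∧
        ∑ i, ∑ j, |eval w.ofLp (pderiv j (pderiv i f))| ≤ C * exp (D * ‖w‖ ^ 2) := by
  obtain ⟨C, D, hC, h⟩ := exists_abs_eval_le_mul_exp
    (∑ i, pderiv i f ^ 2 + ∑ i, ∑ j, (1 + pderiv j (pderiv i f) ^ 2))
  refine ⟨C, D, hC, fun w => ?_⟩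
  have hdom := (le_abs_self _).trans (h w)
  simp only [map_add, map_sum, map_pow, map_one] at hdom
  have hgrad : 0 ≤ ∑ i, eval w.ofLp (pderiv i f) ^ 2 := by positivity
  have hhess : ∑ i, ∑ j, |eval w.ofLp (pderiv j (pderiv i f))|
      ≤ ∑ i, ∑ j, (1 + eval w.ofLp (pderiv j (pderiv i f)) ^ 2) := by
    gcongr with i _ j _
    nlinarith [sq_abs (eval w.ofLp (pderiv j (pderiv i f))),
      sq_nonneg (|eval w.ofLp (pderiv j (pderiv i f))| - 1)]
  have hhess0 : 0 ≤ ∑ i, ∑ j, |eval w.ofLp (pderiv j (pderiv i f))| := by positivity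
  exact ⟨by linarith, by linarith⟩

end MvPolynomial

theorem strongConvexOn_Icc_exp_exp_mul_eval {X : Set (EuclideanSpace ℝ σ)} (hX : Convex ℝ X)
    {f : MvPolynomial σ ℝ} {m C D N : ℝ} (hm : 0 < m) (hmf : ∀ x ∈ X, m ≤ eval x.ofLp f)
    (hC : 0 ≤ C) (hbound : ∀ w : EuclideanSpace ℝ σ,
      ∑ i, eval w.ofLp (pderiv i f) ^ 2 ≤ C * exp (D * ‖w‖ ^ 2) ∧
        ∑ i, ∑ j, |eval w.ofLp (pderiv j (pderiv i f))| ≤ C * exp (D * ‖w‖ ^ 2))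
    (hDN : D ≤ N) (hN : 1 + (1 / m + 1) * C ≤ 2 * N * m) {x y : EuclideanSpace ℝ σ}
    (hx : x ∈ X) (hy : y ∈ X) :
    StrongConvexOn (Icc 0 1) (‖y - x‖ ^ 2) fun t : ℝ =>
      exp (exp (N * ‖x + t • (y - x)‖ ^ 2)) * eval (x + t • (y - x)).ofLp f := by
  set v := y - x
  have hline : ∀ t : ℝ, HasDerivAt (fun t : ℝ => x + t • v) v t := fun t => by
    simpa using ((hasDerivAt_id t).smul_const v).const_add x
  have hq : ∀ t, HasDerivAt (fun t => N * ‖x + t • v‖ ^ 2) (N * (2 * inner ℝ (x + t • v) v)) t :=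
    fun t => (hline t).norm_sq.const_mul N
  have hq' : ∀ t, HasDerivAt (fun t => N * (2 * inner ℝ (x + t • v) v)) (N * (2 * ‖v‖ ^ 2)) t :=
    fun t => by
      simpa [real_inner_self_eq_norm_sq] using
        (((hline t).inner ℝ (hasDerivAt_const t v)).const_mul 2).const_mul N
  have hA : ∀ t, HasDerivAt (fun t => eval (x + t • v).ofLp f)
      (∑ i, v i * eval (x + t • v).ofLp (pderiv i f)) t :=
    fun t => hasDerivAt_eval_add_smul f x.ofLp v.ofLp t
  have hA' : ∀ t, HasDerivAt (fun t => ∑ i, v i * eval (x + t • v).ofLp (pderiv i f))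
      (∑ i, v i * ∑ j, v j * eval (x + t • v).ofLp (pderiv j (pderiv i f))) t :=
    fun t => HasDerivAt.fun_sum fun i _ =>
      (hasDerivAt_eval_add_smul (pderiv i f) x.ofLp v.ofLp t).const_mul (v i)
  refine strongConvexOn_of_hasDerivAt2 (convex_Icc 0 1) (fun t => (hq t).exp_exp_mul (hA t))
    (fun t => (hq t).exp_exp_mul_deriv (hq' t) (hA t) (hA' t)) fun t ht => ?_
  have hN0 : 0 ≤ N := by
    have : 0 < 2 * N * m := by linarith [mul_nonneg (by positivity : 0 ≤ 1 / m + 1) hC]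
    nlinarith
  rw [interior_Icc] at ht
  set w := x + t • v
  have hw : w ∈ X := hX.add_smul_sub_mem hx hy ⟨ht.1.le, ht.2.le⟩
  have hgrowth : C * exp (D * ‖w‖ ^ 2) ≤ C * exp (N * ‖w‖ ^ 2) := by gcongr
  obtain ⟨hgrad, hhess⟩ := hbound w
  refine le_exp_mul_deriv2_of_bounds hm hN0 (sq_nonneg _) (one_le_exp (by positivity)) (hmf w hw)
    ?_ ?_ hN
  · exact (sq_sum_mul_le_norm_sq_mul v _).trans (by gcongr; exact hgrad.trans hgrowth)
  · exact (abs_sum_mul_sum_mul_le v _).trans (by gcongr; exact hhess.trans hgrowth)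

end Euclidean

theorem stmt12_general {n : ℕ} (X : Set (EuclideanSpace ℝ (Fin n)))
    (hXcon : Convex ℝ X)
    (f : MvPolynomial (Fin n) ℝ) (m : ℝ) (hm : 0 < m)
    (hmf : ∀ x ∈ X, m ≤ MvPolynomial.eval (fun i => x i) f) :
    ∃ N₀ : ℝ, ∀ N : ℝ, N₀ ≤ N →
      ∃ μ > 0, StrongConvexOn X μ
        (fun x => Real.exp (Real.exp (N * ‖x‖ ^ 2)) * MvPolynomial.eval (fun i => x i) f) := by
  obtain ⟨C, D, hC, hbound⟩ := exists_pderiv_growth_bound f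
  refine ⟨max D ((1 + (1 / m + 1) * C) / (2 * m)), fun N hN => ⟨1, one_pos, ?_⟩⟩
  have hNm : 1 + (1 / m + 1) * C ≤ 2 * N * m := by
    have := (div_le_iff₀ (by positivity : (0 : ℝ) < 2 * m)).1 (le_of_max_le_right hN)
    linarith
  refine strongConvexOn_of_forall_segment hXcon fun x hx y hy => ?_
  rw [one_mul]
  exact strongConvexOn_Icc_exp_exp_mul_eval hXcon hm hmf hC hbound (le_of_max_le_left hN) hNm hx hy

/-- Let `X ⊆ ℝⁿ` be closed convex and `f` a polynomial with `f ≥ m > 0`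
on `X`. Then there exists `N₀ ∈ ℝ` such that for every `N ≥ N₀` the function
`Φ_N(x) = e^{e^{N|x|²}} f(x)` is strongly convex on `X`. -/
theorem stmt12 {n : ℕ} (X : Set (EuclideanSpace ℝ (Fin n)))
    (hXcl : IsClosed X) (hXcon : Convex ℝ X)
    (f : MvPolynomial (Fin n) ℝ) (m : ℝ) (hm : 0 < m)
    (hmf : ∀ x ∈ X, m ≤ MvPolynomial.eval (fun i => x i) f) :
    ∃ N₀ : ℝ, ∀ N : ℝ, N₀ ≤ N →
      ∃ μ > 0, StrongConvexOn X μ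
        (fun x => Real.exp (Real.exp (N * ‖x‖ ^ 2)) * MvPolynomial.eval (fun i => x i) f) :=
  stmt12_general X hXcon f m hm hmf
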